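/- Let J be a strongly stable monomial ideal in A[x₀,…,xₙ] over a commutative noetherian ring A, F_J a J-marked set, and I = (F_J). Then for every degree s, I_s = ⟨F_J^{(s)}⟩ ⊕ N(J,I)_s as A-modules, where N(J,I) = I ∩ ⟨N(J)⟩. -/

import Mathlib

open MvPolynomial

noncomputable section

/-- Exponent vectors of monomials in the variables `x₀, …, xₙ`. -/
abbrev Mon (n : ℕ) : Type := Fin (n + 1) →₀ ℕ

namespace MarkedFamilies

variable {n : ℕ}

/-- The total degree of a monomial given by its exponent vector. -/
def mdeg (α : Mon n) : ℕ := α.sum fun _ e => e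

/-- A monomial ideal, identified with its (upward closed) set of monomials. -/
def IsMonomialIdeal (J : Set (Mon n)) : Prop := ∀ α ∈ J, ∀ δ : Mon n, α + δ ∈ J

/-- A strongly stable monomial ideal: a monomial ideal such that for every monomial
`x^α ∈ J`, every variable `x_j` dividing `x^α` and every `i > j`, `(x_i/x_j)·x^α ∈ J`. -/
def IsStronglyStable (J : Set (Mon n)) : Prop :=
  IsMonomialIdeal J ∧
    ∀ α ∈ J, ∀ j : Fin (n + 1), α j ≠ 0 → ∀ i : Fin (n + 1), j < i →
      α - Finsupp.single j 1 + Finsupp.single i 1 ∈ J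

/-- The minimal monomial generators `B_J` of a monomial ideal `J`. -/
def minGens (J : Set (Mon n)) : Set (Mon n) :=
  {α | α ∈ J ∧ ∀ j : Fin (n + 1), α j ≠ 0 → α - Finsupp.single j 1 ∉ J}

/-- `min x^γ ≥ max x^δ`: every variable dividing `x^γ` is at least every variable
dividing `x^δ` (vacuously true when either monomial is `1`). -/
def minGeMax (γ δ : Mon n) : Prop := ∀ i ∈ γ.support, ∀ j ∈ δ.support, j ≤ i

/-- Lexicographic order induced by `x₀ < ⋯ < xₙ`: `a <ₗₑₓ b` iff at the largest
index where they differ, `a` has the smaller exponent. -/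
def lexLt (a b : Mon n) : Prop :=
  ∃ i : Fin (n + 1), a i < b i ∧ ∀ j : Fin (n + 1), i < j → a j = b j

/-- A saturated strongly stable ideal: strongly stable and no minimal generator is
divisible by `x₀`. -/
def IsSaturatedSS (J : Set (Mon n)) : Prop :=
  IsStronglyStable J ∧ ∀ α ∈ minGens J, α 0 = 0

/-- The truncation `J_{≥ t}`: the (monomial) ideal generated by the monomials of `J`
of degree at least `t`. -/
def truncSet (J : Set (Mon n)) (t : ℕ) : Set (Mon n) := {α | α ∈ J ∧ t ≤ mdeg α}

section Ring

variable (A : Type*) [CommRing A]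

/-- `⟨N(J)⟩`: the `A`-span of the monomials not in `J`. -/
def nSpan (J : Set (Mon n)) : Submodule A (MvPolynomial (Fin (n + 1)) A) :=
  Submodule.span A {p | ∃ β : Mon n, β ∉ J ∧ p = monomial β (1 : A)}

/-- `⟨N(J)_s⟩`: the `A`-span of the monomials of degree `s` not in `J`. -/
def nSpanDeg (J : Set (Mon n)) (s : ℕ) : Submodule A (MvPolynomial (Fin (n + 1)) A) :=
  Submodule.span A {p | ∃ β : Mon n, β ∉ J ∧ mdeg β = s ∧ p = monomial β (1 : A)}

/-- `I_s`: the degree-`s` homogeneous component of an ideal, as an `A`-submodule. -/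
def idealDeg (I : Ideal (MvPolynomial (Fin (n + 1)) A)) (s : ℕ) :
    Submodule A (MvPolynomial (Fin (n + 1)) A) :=
  Submodule.restrictScalars A I ⊓ homogeneousSubmodule (Fin (n + 1)) A s

/-- `I_{≥ s}`: the ideal `⊕_{t ≥ s} I_t`, i.e. the ideal generated by the homogeneous
elements of `I` of degree at least `s`. -/
def idealGeq (I : Ideal (MvPolynomial (Fin (n + 1)) A)) (s : ℕ) :
    Ideal (MvPolynomial (Fin (n + 1)) A) :=
  Ideal.span {f | f ∈ I ∧ ∃ t : ℕ, s ≤ t ∧ f.IsHomogeneous t}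

/-- A homogeneous ideal of the polynomial ring. -/
def IsHomogIdeal (I : Ideal (MvPolynomial (Fin (n + 1)) A)) : Prop :=
  ∀ f ∈ I, ∀ s : ℕ, homogeneousComponent s f ∈ I

variable {A}

/-- A `J`-marked set: a family assigning to each minimal generator `x^α ∈ B_J` a
polynomial `f_α = x^α − Σ_{x^β ∈ N(J)_{|α|}} c_{αβ} x^β`. -/
def IsMarkedSet (J : Set (Mon n)) (F : Mon n → MvPolynomial (Fin (n + 1)) A) : Prop :=
  ∀ α ∈ minGens J, (F α).coeff α = 1 ∧
    ∀ β ∈ (F α).support, β ≠ α → β ∉ J ∧ mdeg β = mdeg α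

/-- The ideal generated by a marked set. -/
def markedIdeal (J : Set (Mon n)) (F : Mon n → MvPolynomial (Fin (n + 1)) A) :
    Ideal (MvPolynomial (Fin (n + 1)) A) :=
  Ideal.span (F '' minGens J)

/-- A `J`-marked basis: a `J`-marked set `F` with `A[x] = (F) ⊕ ⟨N(J)⟩` as `A`-modules. -/
def IsMarkedBasis (J : Set (Mon n)) (F : Mon n → MvPolynomial (Fin (n + 1)) A) : Prop :=
  IsMarkedSet J F ∧
    IsCompl (Submodule.restrictScalars A (markedIdeal J F)) (nSpan A J)

/-- `F_J^{(s)} = { x^δ f_α : deg(x^δ f_α) = s, min x^α ≥ max x^δ }`. -/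
def FSet (J : Set (Mon n)) (F : Mon n → MvPolynomial (Fin (n + 1)) A) (s : ℕ) :
    Set (MvPolynomial (Fin (n + 1)) A) :=
  {p | ∃ α δ : Mon n, α ∈ minGens J ∧ mdeg α + mdeg δ = s ∧ minGeMax α δ ∧
        p = monomial δ (1 : A) * F α}

/-- `F̂_J^{(s)} = { x^δ f_α : deg(x^δ f_α) = s, min x^α < max x^δ }`. -/
def FHatSet (J : Set (Mon n)) (F : Mon n → MvPolynomial (Fin (n + 1)) A) (s : ℕ) :
    Set (MvPolynomial (Fin (n + 1)) A) :=
  {p | ∃ α δ : Mon n, α ∈ minGens J ∧ mdeg α + mdeg δ = s ∧ ¬ minGeMax α δ ∧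
        p = monomial δ (1 : A) * F α}

/-- `SF_J^{(s)} = { x^δ f_β − x^γ f_α : x^δ f_β ∈ F̂_J^{(s)}, x^γ f_α ∈ F_J^{(s)},
x^δ x^β = x^γ x^α }`. -/
def SFSet (J : Set (Mon n)) (F : Mon n → MvPolynomial (Fin (n + 1)) A) (s : ℕ) :
    Set (MvPolynomial (Fin (n + 1)) A) :=
  {p | ∃ α γ β δ : Mon n, α ∈ minGens J ∧ β ∈ minGens J ∧
      mdeg β + mdeg δ = s ∧ ¬ minGeMax β δ ∧
      mdeg α + mdeg γ = s ∧ minGeMax α γ ∧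
      δ + β = γ + α ∧ p = monomial δ (1 : A) * F β - monomial γ (1 : A) * F α}

/-- A `(J_s)`-marked set: one marked polynomial `f̃_γ = x^γ − Σ_{x^δ ∈ N(J)_s} d_{γδ} x^δ`
for each monomial `x^γ` of degree `s` in `J`. -/
def IsTruncMarkedSet (J : Set (Mon n)) (s : ℕ)
    (f : Mon n → MvPolynomial (Fin (n + 1)) A) : Prop :=
  ∀ γ : Mon n, γ ∈ J → mdeg γ = s →
    (f γ).coeff γ = 1 ∧ ∀ β ∈ (f γ).support, β ≠ γ → β ∉ J ∧ mdeg β = s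

end Ring

/-- Index set for the generic coefficients `C_{αβ}` (`x^α ∈ B_J`, `x^β ∈ N(J)_{|α|}`). -/
abbrev CIdx (J : Set (Mon n)) : Type :=
  {p : Mon n × Mon n // p.1 ∈ minGens J ∧ p.2 ∉ J ∧ mdeg p.2 = mdeg p.1}

/-- The coefficient ring `ℤ[C]`. -/
abbrev ZC (J : Set (Mon n)) : Type := MvPolynomial (CIdx J) ℤ

/-- The generic `J`-marked set `𝓕_J = { x^α − Σ_{x^β ∈ N(J)_{|α|}} C_{αβ} x^β }`
in `ℤ[C][x]`, characterized through its coefficients. -/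
def IsGenericMarkedSet (J : Set (Mon n))
    (𝓕 : Mon n → MvPolynomial (Fin (n + 1)) (ZC J)) : Prop :=
  ∀ α : Mon n, ∀ hα : α ∈ minGens J,
    (𝓕 α).coeff α = 1 ∧
    (∀ γ : Mon n, ∀ hγ : γ ∉ J ∧ mdeg γ = mdeg α,
      (𝓕 α).coeff γ = - MvPolynomial.X ⟨(α, γ), hα, hγ.1, hγ.2⟩) ∧
    (∀ γ : Mon n, γ ≠ α → ¬(γ ∉ J ∧ mdeg γ = mdeg α) → (𝓕 α).coeff γ = 0)

/-- The ideal `𝔦_J ⊆ ℤ[C]` generated by the `x`-coefficients of all polynomials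
in `(𝓕_J) ∩ ⟨N(J)⟩`. -/
def markedCoeffIdeal (J : Set (Mon n))
    (𝓕 : Mon n → MvPolynomial (Fin (n + 1)) (ZC J)) : Ideal (ZC J) :=
  Ideal.span {c : ZC J | ∃ p : MvPolynomial (Fin (n + 1)) (ZC J),
    p ∈ markedIdeal J 𝓕 ∧ p ∈ nSpan (ZC J) J ∧ ∃ γ : Mon n, p.coeff γ = c}

/-- The evaluation homomorphism `φ_{F_J} : ℤ[C] → A`, `C_{αβ} ↦ c_{αβ}`, associated to a
`J`-marked set `F` with `f_α = x^α − Σ c_{αβ} x^β` (so `c_{αβ} = −(F α).coeff β`). -/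
noncomputable def evalHom (J : Set (Mon n)) {A : Type*} [CommRing A]
    (F : Mon n → MvPolynomial (Fin (n + 1)) A) : ZC J →+* A :=
  MvPolynomial.eval₂Hom (Int.castRingHom A) fun p => -((F p.val.1).coeff p.val.2)

/-- `x^γ` is the `σ`-leading monomial of `g` (with nonzero leading coefficient). -/
def IsLeadingMon {A : Type*} [CommRing A] (σlt : Mon n → Mon n → Prop)
    (g : MvPolynomial (Fin (n + 1)) A) (γ : Mon n) : Prop :=
  g.coeff γ ≠ 0 ∧ ∀ δ ∈ g.support, δ ≠ γ → σlt δ γ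

/-- `LC(I, x^γ)`: the set of leading coefficients at `x^γ` of elements of `I`,
together with `0`. -/
def LCset {A : Type*} [CommRing A] (σlt : Mon n → Mon n → Prop)
    (I : Ideal (MvPolynomial (Fin (n + 1)) A)) (γ : Mon n) : Set A :=
  {a | ∃ g ∈ I, IsLeadingMon σlt g γ ∧ g.coeff γ = a} ∪ {0}

/-- A monic ideal with respect to the term ordering `σ`. -/
def IsMonicIdeal {A : Type*} [CommRing A] (σlt : Mon n → Mon n → Prop)
    (I : Ideal (MvPolynomial (Fin (n + 1)) A)) : Prop :=
  ∀ γ : Mon n, LCset σlt I γ = {0} ∨ LCset σlt I γ = Set.univ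

/-- The set of `σ`-leading monomials of elements of `I` (i.e. `in_σ(I)`,
identified with its set of monomials). -/
def leadingMons {A : Type*} [CommRing A] (σlt : Mon n → Mon n → Prop)
    (I : Ideal (MvPolynomial (Fin (n + 1)) A)) : Set (Mon n) :=
  {γ | ∃ g ∈ I, IsLeadingMon σlt g γ}

end MarkedFamilies
end

/-!
Strong stability gives every monomial `x^η ∈ J` a unique decomposition `x^η = x^α x^δ` with
`x^α ∈ B_J` and `min x^α ≥ max x^δ`. Writing `x^δ x^α = x^δ f_α + x^δ (x^α - f_α)`, every
monomial of the second summand lying in `J` has a decomposition whose `δ`-part is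
lexicographically smaller, so induction along the lexicographic order puts every degree-`s`
monomial in `⟨F_J^{(s)}⟩ + ⟨N(J)⟩`. Conversely, in a nonzero combination of products `x^δ f_α`
with `min x^α ≥ max x^δ`, the monomial `x^α x^δ` of the term with lex-largest `δ` occurs in no
other term, so the combination has a nonzero coefficient on a monomial of `J` and cannot lie
in `⟨N(J)⟩`.
-/

namespace MarkedFamilies

open MvPolynomial

variable {n : ℕ} {J : Set (Mon n)}

section Monomials

open Finsupp

lemma mdeg_add (α β : Mon n) : mdeg (α + β) = mdeg α + mdeg β :=
  map_add Finsupp.degree α β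

lemma weight_one_eq_mdeg (α : Mon n) : weight 1 α = mdeg α := by
  rw [show mdeg α = α.degree from rfl, degree_eq_weight_one]
  rfl

lemma lexLt_iff_toColex_lt {a b : Mon n} : lexLt a b ↔ toColex ⇑a < toColex ⇑b := by
  simp only [lexLt]
  exact (exists_congr fun _ => and_comm).trans Iff.rfl

lemma lexLt_wellFounded : WellFounded (lexLt (n := n)) :=
  Subrelation.wf lexLt_iff_toColex_lt.1 (InvImage.wf (fun a : Mon n => toColex ⇑a) wellFounded_lt)

lemma lexLt_trichotomous (a b : Mon n) : lexLt a b ∨ a = b ∨ lexLt b a := by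
  simp only [lexLt_iff_toColex_lt]
  rcases lt_trichotomy (toColex ⇑a) (toColex ⇑b) with h | h | h
  · exact Or.inl h
  · exact Or.inr (Or.inl (DFunLike.coe_injective (toColex.injective h)))
  · exact Or.inr (Or.inr h)

lemma IsMonomialIdeal.mem_of_le (hJ : IsMonomialIdeal J) {a b : Mon n} (ha : a ∈ J)
    (hab : a ≤ b) : b ∈ J := by
  simpa [add_tsub_cancel_of_le hab] using hJ a ha (b - a)

lemma IsMonomialIdeal.eq_of_le_of_mem_minGens (hJ : IsMonomialIdeal J) {a b : Mon n}
    (ha : a ∈ J) (hb : b ∈ minGens J) (hab : a ≤ b) : a = b := by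
  by_contra hne
  obtain ⟨j, hj⟩ : ∃ j, a j < b j := by
    by_contra! h
    exact hne (le_antisymm hab (le_def.2 h))
  refine hb.2 j (by omega) (hJ.mem_of_le ha (le_def.2 fun i => ?_))
  have hi := le_def.1 hab i
  rw [tsub_apply, single_apply]
  split_ifs with hji
  · subst hji; omega
  · omega

lemma IsStronglyStable.sub_single_mem_of_lt (hJ : IsStronglyStable J) {η : Mon n}
    {i j : Fin (n + 1)} (hj : η j ≠ 0) (hηj : η - single j 1 ∈ J) (hij : i < j) (hi : η i ≠ 0) :
    η - single i 1 ∈ J := by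
  have hi' : (η - single j 1 : Mon n) i ≠ 0 := by
    rw [tsub_apply, single_eq_of_ne hij.ne]
    omega
  convert hJ.2 _ hηj i hi' j hij using 1
  ext k
  simp only [tsub_apply, Finsupp.add_apply, single_apply]
  split_ifs <;> subst_vars <;> omega

/-- The Eliahou–Kervaire decomposition of a monomial of `J`. -/
theorem IsStronglyStable.exists_minGens_add (hJ : IsStronglyStable J) {η : Mon n}
    (hη : η ∈ J) : ∃ α ∈ minGens J, ∃ δ, minGeMax α δ ∧ α + δ = η := by
  induction η using WellFoundedLT.induction with
  | _ η ih =>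
  by_cases hmin : η ∈ minGens J
  · exact ⟨η, hmin, 0, by simp [minGeMax], add_zero η⟩
  obtain ⟨j, hj, hηj⟩ : ∃ j, η j ≠ 0 ∧ η - single j 1 ∈ J := by
    simpa [minGens, hη] using hmin
  have hsupp : η.support.Nonempty := ⟨j, mem_support_iff.2 hj⟩
  set m := η.support.min' hsupp
  have hm : η m ≠ 0 := mem_support_iff.1 (η.support.min'_mem hsupp)
  have hmin_le : ∀ i, η i ≠ 0 → m ≤ i := fun i hi => η.support.min'_le i (mem_support_iff.2 hi)
  have hηm : η - single m 1 ∈ J := by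
    rcases (hmin_le j hj).eq_or_lt with h | h
    · rwa [h]
    · exact hJ.sub_single_mem_of_lt hj hηj h hm
  have hle : single m 1 ≤ η := by
    rw [single_le_iff]
    omega
  have hlt : η - single m 1 < η := by
    refine lt_of_le_of_ne tsub_le_self fun h => ?_
    have := congrArg (· m) h
    simp only [tsub_apply, single_eq_same] at this
    omega
  obtain ⟨α, hα, δ, hαδ, he⟩ := ih _ hlt hηm
  refine ⟨α, hα, δ + single m 1, fun i hi k hk => ?_,
    by rw [← add_assoc, he, tsub_add_cancel_of_le hle]⟩
  rcases Finset.mem_union.1 (support_add hk) with hk | hk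
  · exact hαδ i hi k hk
  · rw [Finset.mem_singleton.1 (support_single_subset hk)]
    refine hmin_le i fun h0 => mem_support_iff.1 hi ?_
    have := congrArg (· i) he
    simp only [Finsupp.add_apply, tsub_apply] at this
    omega

lemma le_or_le_of_add_eq_add {α δ α' δ' : Mon n} (h : minGeMax α δ) (h' : minGeMax α' δ')
    (he : α + δ = α' + δ') : α ≤ α' ∨ α' ≤ α := by
  refine or_iff_not_imp_left.2 fun hnot => le_def.2 fun i => ?_
  obtain ⟨v, hv⟩ : ∃ v, α' v < α v := by simpa [le_def] using hnot
  have hev : ∀ k, α k + δ k = α' k + δ' k := fun k => by simpa using congrArg (· k) he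
  by_cases hi : α' i = 0
  · omega
  have hvi : v ≤ i := h' i (mem_support_iff.2 hi) v (mem_support_iff.2 (by have := hev v; omega))
  rcases hvi.eq_or_lt with rfl | hvi
  · exact hv.le
  · have hδi : δ i = 0 := by
      by_contra hδi
      exact (h v (mem_support_iff.2 (by omega)) i (mem_support_iff.2 hδi)).not_gt hvi
    have := hev i
    omega

theorem minGens_add_unique (hJ : IsMonomialIdeal J) {α δ α' δ' : Mon n} (hα : α ∈ minGens J)
    (hα' : α' ∈ minGens J) (h : minGeMax α δ) (h' : minGeMax α' δ') (he : α + δ = α' + δ') :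
    α = α' ∧ δ = δ' := by
  obtain rfl : α = α' := (le_or_le_of_add_eq_add h h' he).elim
    (hJ.eq_of_le_of_mem_minGens hα.1 hα')
    (fun hle => (hJ.eq_of_le_of_mem_minGens hα'.1 hα hle).symm)
  exact ⟨rfl, add_left_cancel he⟩

theorem lexLt_of_add_eq_add (hJ : IsMonomialIdeal J) {α δ β γ : Mon n} (hα : α ∈ J)
    (hαδ : minGeMax α δ) (hβ : β ∉ J) (he : δ + α = γ + β) : lexLt δ γ := by
  have hev : ∀ k, δ k + α k = γ k + β k := fun k => by simpa using congrArg (· k) he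
  rcases lexLt_trichotomous δ γ with h | rfl | ⟨i, hlt, hup⟩
  · exact h
  · exact absurd (add_left_cancel he ▸ hα) hβ
  · refine absurd (hJ.mem_of_le hα (le_def.2 fun k => ?_)) hβ
    by_cases hk : α k = 0
    · omega
    have hik : i ≤ k := hαδ k (mem_support_iff.2 hk) i (mem_support_iff.2 (by omega))
    rcases hik.eq_or_lt with rfl | hik
    · have := hev i
      omega
    · have := hev k
      have := hup k hik
      omega

end Monomials

section Polynomials

variable {σ A : Type*} [CommRing A]

lemma mem_of_forall_monomial_one_mem {N : Submodule A (MvPolynomial σ A)} {p : MvPolynomial σ A}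
    (h : ∀ β ∈ p.support, monomial β (1 : A) ∈ N) : p ∈ N := by
  rw [p.as_sum]
  refine Submodule.sum_mem _ fun β hβ => ?_
  simpa [smul_monomial] using N.smul_mem (coeff β p) (h β hβ)

lemma monomial_one_mul_mem {N : Submodule A (MvPolynomial σ A)} {δ : σ →₀ ℕ}
    {p : MvPolynomial σ A} (h : ∀ β ∈ p.support, monomial (δ + β) (1 : A) ∈ N) :
    monomial δ 1 * p ∈ N :=
  mem_of_forall_monomial_one_mem (N := N.comap (LinearMap.mulLeft A (monomial δ 1))) fun β hβ => by
    simpa [monomial_mul] using h β hβ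

end Polynomials

variable {A : Type*} [CommRing A] {F : Mon n → MvPolynomial (Fin (n + 1)) A}

lemma coeff_eq_zero_of_mem_nSpan {q : MvPolynomial (Fin (n + 1)) A} (hq : q ∈ nSpan A J)
    {γ : Mon n} (hγ : γ ∈ J) : coeff γ q = 0 := by
  refine (Submodule.span_le (p := LinearMap.ker (lcoeff A γ))).2 ?_ hq
  rintro _ ⟨β, hβ, rfl⟩
  simp only [SetLike.mem_coe, LinearMap.mem_ker, lcoeff_apply, coeff_monomial]
  exact if_neg fun (h : β = γ) => hβ (h ▸ hγ)

lemma IsMarkedSet.isHomogeneous (hF : IsMarkedSet J F) {α : Mon n} (hα : α ∈ minGens J) :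
    (F α).IsHomogeneous (mdeg α) := by
  intro β hβ
  rw [weight_one_eq_mdeg]
  rcases eq_or_ne β α with rfl | hne
  · rfl
  · exact ((hF α hα).2 β (mem_support_iff.2 hβ) hne).2

lemma IsMarkedSet.mem_support_sub_monomial (hF : IsMarkedSet J F) {α β : Mon n}
    (hα : α ∈ minGens J) (hβ : β ∈ (F α - monomial α 1).support) : β ∉ J ∧ mdeg β = mdeg α := by
  rw [mem_support_iff, coeff_sub, coeff_monomial] at hβ
  split_ifs at hβ with h
  · exact absurd (by rw [← h, (hF α hα).1, sub_self]) hβ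
  · exact (hF α hα).2 β (mem_support_iff.2 (by simpa using hβ)) (Ne.symm h)

lemma coeff_monomial_one_mul_self (hF : IsMarkedSet J F) {α : Mon n} (hα : α ∈ minGens J)
    (δ : Mon n) : coeff (α + δ) (monomial δ 1 * F α) = 1 := by
  rw [coeff_monomial_mul', if_pos le_add_self, add_tsub_cancel_right, (hF α hα).1, one_mul]

lemma coeff_monomial_one_mul_eq_zero (hJ : IsMonomialIdeal J) (hF : IsMarkedSet J F)
    {α δ α₀ δ₀ : Mon n} (hα : α ∈ minGens J) (hαδ : minGeMax α δ) (hα₀ : α₀ ∈ minGens J)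
    (hα₀δ₀ : minGeMax α₀ δ₀) (hlex : ¬ lexLt δ₀ δ) (hne : (α, δ) ≠ (α₀, δ₀)) :
    coeff (α₀ + δ₀) (monomial δ 1 * F α) = 0 := by
  rw [coeff_monomial_mul']
  split_ifs with hle
  swap
  · rfl
  rw [one_mul]
  by_contra h0
  have hβ : δ + (α₀ + δ₀ - δ) = δ₀ + α₀ := by rw [add_tsub_cancel_of_le hle, add_comm]
  rcases eq_or_ne (α₀ + δ₀ - δ) α with hβα | hβα
  · rw [hβα, add_comm, add_comm δ₀] at hβ
    obtain ⟨rfl, rfl⟩ := minGens_add_unique hJ hα hα₀ hαδ hα₀δ₀ hβ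
    exact hne rfl
  · exact hlex (lexLt_of_add_eq_add hJ hα₀.1 hα₀δ₀
      ((hF α hα).2 _ (mem_support_iff.2 h0) hβα).1 hβ.symm)

theorem monomial_add_mem_span_FSet_sup_nSpan (hJ : IsStronglyStable J) (hF : IsMarkedSet J F)
    {s : ℕ} (δ : Mon n) : ∀ α ∈ minGens J, minGeMax α δ → mdeg α + mdeg δ = s →
      monomial (α + δ) (1 : A) ∈ Submodule.span A (FSet J F s) ⊔ nSpan A J := by
  induction δ using lexLt_wellFounded.induction with
  | _ δ ih =>
  intro α hα hαδ hs
  have hlead : monomial δ 1 * F α ∈ Submodule.span A (FSet J F s) ⊔ nSpan A J :=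
    Submodule.mem_sup_left (Submodule.subset_span ⟨α, δ, hα, hs, hαδ, rfl⟩)
  have htail : monomial δ 1 * (F α - monomial α 1) ∈
      Submodule.span A (FSet J F s) ⊔ nSpan A J := by
    refine monomial_one_mul_mem fun β hβ => ?_
    obtain ⟨hβJ, hβdeg⟩ := hF.mem_support_sub_monomial hα hβ
    by_cases hin : δ + β ∈ J
    · obtain ⟨α₁, hα₁, δ₁, hα₁δ₁, he⟩ := hJ.exists_minGens_add hin
      rw [← he]
      refine ih δ₁ (lexLt_of_add_eq_add hJ.1 hα₁.1 hα₁δ₁ hβJ (by rw [add_comm, he]))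
        α₁ hα₁ hα₁δ₁ ?_
      rw [← mdeg_add, he, mdeg_add]
      omega
    · exact Submodule.mem_sup_right (Submodule.subset_span ⟨_, hin, rfl⟩)
  have hsplit : monomial (α + δ) (1 : A) =
      monomial δ 1 * F α - monomial δ 1 * (F α - monomial α 1) := by
    rw [mul_sub, sub_sub_cancel, monomial_mul, one_mul, add_comm δ α]
  rw [hsplit]
  exact Submodule.sub_mem _ hlead htail

theorem homogeneousSubmodule_le_span_FSet_sup_nSpan (hJ : IsStronglyStable J)
    (hF : IsMarkedSet J F) (s : ℕ) :
    homogeneousSubmodule (Fin (n + 1)) A s ≤ Submodule.span A (FSet J F s) ⊔ nSpan A J := by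
  intro f hf
  refine mem_of_forall_monomial_one_mem fun η hη => ?_
  by_cases hin : η ∈ J
  · obtain ⟨α, hα, δ, hαδ, rfl⟩ := hJ.exists_minGens_add hin
    refine monomial_add_mem_span_FSet_sup_nSpan hJ hF δ α hα hαδ ?_
    rw [← mdeg_add, ← weight_one_eq_mdeg]
    exact hf (mem_support_iff.1 hη)
  · exact Submodule.mem_sup_right (Submodule.subset_span ⟨η, hin, rfl⟩)

lemma span_FSet_le_idealDeg (hF : IsMarkedSet J F) (s : ℕ) :
    Submodule.span A (FSet J F s) ≤ idealDeg A (markedIdeal J F) s := by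
  refine Submodule.span_le.2 ?_
  rintro _ ⟨α, δ, hα, hs, -, rfl⟩
  refine ⟨Ideal.mul_mem_left _ _ (Ideal.subset_span ⟨α, hα, rfl⟩), ?_⟩
  rw [SetLike.mem_coe, mem_homogeneousSubmodule, ← hs, add_comm (mdeg α)]
  exact (isHomogeneous_monomial _ rfl).mul (hF.isHomogeneous hα)

lemma FSet_subset_image (s : ℕ) :
    FSet J F s ⊆ (fun x : Mon n × Mon n => monomial x.2 (1 : A) * F x.1) ''
      {x | x.1 ∈ minGens J ∧ minGeMax x.1 x.2} := by
  rintro _ ⟨α, δ, hα, -, hαδ, rfl⟩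
  exact ⟨(α, δ), ⟨hα, hαδ⟩, rfl⟩

theorem linearCombination_eq_zero_of_mem_nSpan (hJ : IsMonomialIdeal J) (hF : IsMarkedSet J F)
    {l : Mon n × Mon n →₀ A}
    (hl : l ∈ Finsupp.supported A A {x | x.1 ∈ minGens J ∧ minGeMax x.1 x.2})
    (h : Finsupp.linearCombination A (fun x => monomial x.2 (1 : A) * F x.1) l ∈ nSpan A J) :
    l = 0 := by
  by_contra hl0
  obtain ⟨x₀, hx₀, hmax⟩ :=
    l.support.exists_max_image (fun x => toColex ⇑x.2) (Finsupp.support_nonempty_iff.2 hl0)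
  obtain ⟨hα₀, hα₀δ₀⟩ := hl hx₀
  have hzero := coeff_eq_zero_of_mem_nSpan h (hJ _ hα₀.1 x₀.2)
  rw [Finsupp.linearCombination_apply, Finsupp.sum, coeff_sum,
    Finset.sum_eq_single_of_mem x₀ hx₀, coeff_smul, coeff_monomial_one_mul_self hF hα₀,
    smul_eq_mul, mul_one] at hzero
  · exact Finsupp.mem_support_iff.1 hx₀ hzero
  · intro x hx hne
    obtain ⟨hα, hαδ⟩ := hl hx
    rw [coeff_smul, coeff_monomial_one_mul_eq_zero hJ hF hα hαδ hα₀ hα₀δ₀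
      (fun hlt => (lexLt_iff_toColex_lt.1 hlt).not_ge (hmax x hx)) hne, smul_zero]

end MarkedFamilies

open MvPolynomial MarkedFamilies in
theorem stmt_6_general {n : ℕ} {A : Type*} [CommRing A]
    (J : Set (Mon n)) (hJ : IsStronglyStable J)
    (F : Mon n → MvPolynomial (Fin (n + 1)) A) (hF : IsMarkedSet J F) (s : ℕ) :
    idealDeg A (markedIdeal J F) s
        = Submodule.span A (FSet J F s) ⊔
            ((Submodule.restrictScalars A (markedIdeal J F) ⊓ nSpan A J)
              ⊓ homogeneousSubmodule (Fin (n + 1)) A s) ∧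
    Submodule.span A (FSet J F s) ⊓
        ((Submodule.restrictScalars A (markedIdeal J F) ⊓ nSpan A J)
          ⊓ homogeneousSubmodule (Fin (n + 1)) A s) = ⊥ := by
  have hspan := span_FSet_le_idealDeg hF s
  refine ⟨le_antisymm (fun f hf => ?_) ?_, eq_bot_iff.2 ?_⟩
  · obtain ⟨p, hp, q, hq, rfl⟩ :=
      Submodule.mem_sup.1 (homogeneousSubmodule_le_span_FSet_sup_nSpan hJ hF s hf.2)
    refine Submodule.mem_sup.2 ⟨p, hp, q, ⟨⟨?_, hq⟩, ?_⟩, rfl⟩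
    · simpa using Submodule.sub_mem _ hf.1 (hspan hp).1
    · simpa using Submodule.sub_mem _ hf.2 (hspan hp).2
  · exact sup_le hspan (le_inf (inf_le_left.trans inf_le_left) inf_le_right)
  · rintro g ⟨hg, ⟨-, hgN⟩, -⟩
    obtain ⟨l, hl, rfl⟩ := (Finsupp.mem_span_image_iff_linearCombination A).1
      (Submodule.span_mono (FSet_subset_image s) hg)
    rw [linearCombination_eq_zero_of_mem_nSpan hJ.1 hF hl hgN, map_zero]
    exact Submodule.zero_mem _

open MvPolynomial MarkedFamilies in
/-- `I_s = ⟨F_J^{(s)}⟩ ⊕ N(J,I)_s`, where `N(J,I) = I ∩ ⟨N(J)⟩`. -/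
theorem stmt_6 {n : ℕ} {A : Type*} [CommRing A] [IsNoetherianRing A]
    (J : Set (Mon n)) (hJ : IsStronglyStable J)
    (F : Mon n → MvPolynomial (Fin (n + 1)) A) (hF : IsMarkedSet J F) (s : ℕ) :
    idealDeg A (markedIdeal J F) s
        = Submodule.span A (FSet J F s) ⊔
            ((Submodule.restrictScalars A (markedIdeal J F) ⊓ nSpan A J)
              ⊓ homogeneousSubmodule (Fin (n + 1)) A s) ∧
    Submodule.span A (FSet J F s) ⊓
        ((Submodule.restrictScalars A (markedIdeal J F) ⊓ nSpan A J)
          ⊓ homogeneousSubmodule (Fin (n + 1)) A s) = ⊥ :=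
  stmt_6_general J hJ F hF s
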